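/- Let B be a ℤ-graded bialgebra over a field k satisfying the twisting conditions, and let {α_i : B → k}_{i∈ℤ} be a family of linear functionals, each convolution invertible with convolution inverse α_i^{-1}. Then the following four conditions are equivalent (each quantified over all i, j ∈ ℤ, all homogeneous a ∈ B_j, and all b ∈ B): (1) Σ α_i(a·b_1)·α_j(b_2) = α_i(a)·α_{i+j}(b); (2) α_i(ab) = α_i(a)·(α_{i+j} * α_j^{-1})(b); (3) α_i^{-1}(ab) = α_i^{-1}(a)·(α_j * α_{i+j}^{-1})(b); (4) Σ α_i^{-1}(a·b_1)·α_{i+j}(b_2) = α_i^{-1}(a)·α_j(b). -/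

import Mathlib

/-!
Work in the convolution algebra `WithConv (B →ₗ[k] k)` and write `a ▹ φ` for `φ (a * -)`
(`dualMulLeft a φ`). Since `Δ` is multiplicative, `a ▹ (φ * ψ) = ∑ (a₁ ▹ φ) * (a₂ ▹ ψ)`, and
`a ▹ 1 = ε(a) • 1`. Conditions (1) ⇔ (2) and (3) ⇔ (4) differ by a right multiplication with a
unit. For (2) ⇒ (3) put `u = α_i` and `p = α_{i+j} * α_j⁻¹`, so that (2) reads `a ▹ u = u(a) • p`
on `B_j`. For `x ∈ B_j` we have `Δx ∈ B_j ⊗ B_j`, and applying `x ▹` to `u * u⁻¹ = 1` gives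
`∑ u(x₁) • (x₂ ▹ u⁻¹) = ε(x) • p⁻¹`, i.e. `u * u⁻¹(- * b)` equals `ε(-) p⁻¹(b)` on `B_j`.
Since `u⁻¹(a b) = (u⁻¹ * (u * u⁻¹(- * b)))(a)` and for `a ∈ B_j` the `a₂` lie in `B_j`, this is
`∑ u⁻¹(a₁) ε(a₂) p⁻¹(b) = u⁻¹(a) p⁻¹(b)`. The converse is the same argument for `u⁻¹` and `p⁻¹`.
-/

noncomputable def conv {k B : Type*} [CommSemiring k] [AddCommMonoid B] [Module k B]
    [Coalgebra k B] (f g : B →ₗ[k] k) : B →ₗ[k] k :=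
  LinearMap.mul' k k ∘ₗ TensorProduct.map f g ∘ₗ Coalgebra.comul

open WithConv

lemma WithConv.sum_apply {k M N ι : Type*} [CommSemiring k] [AddCommMonoid M] [Module k M]
    [AddCommMonoid N] [Module k N] (s : Finset ι) (f : ι → WithConv (M →ₗ[k] N)) (x : M) :
    (∑ i ∈ s, f i) x = ∑ i ∈ s, f i x := by
  change (WithConv.linearEquiv k _ (∑ i ∈ s, f i)) x = _
  rw [map_sum, LinearMap.coe_sum, Finset.sum_apply]
  rfl

lemma WithConv.eq_iff_forall_apply {k M N : Type*} [CommSemiring k] [AddCommMonoid M]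
    [Module k M] [AddCommMonoid N] [Module k N] {φ ψ : WithConv (M →ₗ[k] N)} :
    φ = ψ ↔ ∀ x, φ x = ψ x :=
  WithConv.ext_iff.trans LinearMap.ext_iff

lemma toConv_mul_toConv_eq_one {k B : Type*} [CommSemiring k] [AddCommMonoid B] [Module k B]
    [Coalgebra k B] {f g : B →ₗ[k] k} (h : conv f g = Coalgebra.counit) :
    toConv f * toConv g = 1 := by
  ext b
  exact congr($h b)

lemma Coalgebra.exists_repr_mem_of_comul_mem_range {k B : Type*} [CommSemiring k]
    [AddCommMonoid B] [Module k B] [CoalgebraStruct k B] {N : Submodule k B} {a : B}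
    (ha : Coalgebra.comul (R := k) a ∈ LinearMap.range (TensorProduct.mapIncl N N)) :
    ∃ 𝓡 : Coalgebra.Repr k a (N × N), ∀ i, 𝓡.left i ∈ N ∧ 𝓡.right i ∈ N := by
  obtain ⟨w, hw⟩ := ha
  obtain ⟨S, rfl⟩ := TensorProduct.exists_finset w
  refine ⟨⟨S, fun i => i.1, fun i => i.2, ?_⟩, fun i => ⟨i.1.2, i.2.2⟩⟩
  simp [← hw, map_sum, TensorProduct.mapIncl]

section DualMul

variable {k B : Type*} [CommSemiring k] [Semiring B] [Bialgebra k B]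

noncomputable def dualMulLeft (a : B) (φ : WithConv (B →ₗ[k] k)) : WithConv (B →ₗ[k] k) :=
  toConv (φ.ofConv ∘ₗ LinearMap.mulLeft k a)

noncomputable def dualMulRight (b : B) (φ : WithConv (B →ₗ[k] k)) : WithConv (B →ₗ[k] k) :=
  toConv (φ.ofConv ∘ₗ LinearMap.mulRight k b)

@[simp] lemma dualMulLeft_apply (a b : B) (φ : WithConv (B →ₗ[k] k)) :
    dualMulLeft a φ b = φ (a * b) := rfl

@[simp] lemma dualMulRight_apply (a b : B) (φ : WithConv (B →ₗ[k] k)) :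
    dualMulRight b φ a = φ (a * b) := rfl

lemma dualMulLeft_mul {ι : Type*} {a : B} (𝓡 : Coalgebra.Repr k a ι)
    (φ ψ : WithConv (B →ₗ[k] k)) :
    dualMulLeft a (φ * ψ) =
      ∑ i ∈ 𝓡.index, dualMulLeft (𝓡.left i) φ * dualMulLeft (𝓡.right i) ψ := by
  ext b
  let 𝓢 := Coalgebra.Repr.arbitrary k b
  rw [WithConv.sum_apply]
  change (φ * ψ) (a * b) = _
  rw [(𝓡.mul 𝓢).convMul_apply, Coalgebra.Repr.mul_index, Finset.sum_product]
  refine Finset.sum_congr rfl fun i _ => ?_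
  rw [𝓢.convMul_apply]
  rfl

lemma dualMulLeft_one (a : B) :
    dualMulLeft a (1 : WithConv (B →ₗ[k] k)) = Coalgebra.counit (R := k) a • 1 := by
  ext b
  simp

lemma sum_smul_dualMulLeft_inv {ι : Type*} {x : B} (𝓡 : Coalgebra.Repr k x ι)
    {u p : (WithConv (B →ₗ[k] k))ˣ}
    (h : ∀ i ∈ 𝓡.index, dualMulLeft (𝓡.left i) u.val = u.val (𝓡.left i) • p.val) :
    ∑ i ∈ 𝓡.index, u.val (𝓡.left i) • dualMulLeft (𝓡.right i) (u⁻¹).val =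
      Coalgebra.counit (R := k) x • (p⁻¹).val := by
  calc _ = (p⁻¹).val * (p.val * ∑ i ∈ 𝓡.index,
        u.val (𝓡.left i) • dualMulLeft (𝓡.right i) (u⁻¹).val) := by
        rw [Units.inv_mul_cancel_left]
    _ = (p⁻¹).val * dualMulLeft x (u.val * (u⁻¹).val) := by
        rw [dualMulLeft_mul 𝓡, Finset.mul_sum]
        refine congrArg _ (Finset.sum_congr rfl fun i hi => ?_)
        rw [h i hi, mul_smul_comm, smul_mul_assoc]
    _ = _ := by rw [Units.mul_inv, dualMulLeft_one, mul_smul_comm, mul_one]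

lemma dualMulLeft_inv_eq {N : Submodule k B}
    (hN : ∀ x ∈ N, Coalgebra.comul (R := k) x ∈ LinearMap.range (TensorProduct.mapIncl N N))
    {u p : (WithConv (B →ₗ[k] k))ˣ} (h : ∀ v ∈ N, dualMulLeft v u.val = u.val v • p.val)
    {a : B} (ha : a ∈ N) :
    dualMulLeft a (u⁻¹).val = (u⁻¹).val a • (p⁻¹).val := by
  ext b
  have hmid : ∀ x ∈ N,
      (u.val * dualMulRight b (u⁻¹).val) x = Coalgebra.counit (R := k) x * (p⁻¹).val b := by
    intro x hx
    obtain ⟨𝓢, h𝓢⟩ := Coalgebra.exists_repr_mem_of_comul_mem_range (hN x hx)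
    have hsum := congr($(sum_smul_dualMulLeft_inv 𝓢 fun i _ => h _ (h𝓢 i).1) b)
    rw [WithConv.sum_apply] at hsum
    rw [𝓢.convMul_apply]
    simpa using hsum
  obtain ⟨𝓡, h𝓡⟩ := Coalgebra.exists_repr_mem_of_comul_mem_range (hN a ha)
  calc (u⁻¹).val (a * b)
      = ((u⁻¹).val * u.val * dualMulRight b (u⁻¹).val) a := by
        rw [Units.inv_mul, one_mul]; rfl
    _ = ∑ i ∈ 𝓡.index, (u⁻¹).val (𝓡.left i) *
          (Coalgebra.counit (R := k) (𝓡.right i) * (p⁻¹).val b) := by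
        rw [mul_assoc, 𝓡.convMul_apply]
        exact Finset.sum_congr rfl fun i _ => by rw [hmid _ (h𝓡 i).2]
    _ = ((u⁻¹).val * 1) a * (p⁻¹).val b := by
        rw [𝓡.convMul_apply, Finset.sum_mul]
        simp [mul_assoc]
    _ = _ := by rw [mul_one]; rfl

lemma forall_dualMulLeft_eq_iff_inv {N : Submodule k B}
    (hN : ∀ x ∈ N, Coalgebra.comul (R := k) x ∈ LinearMap.range (TensorProduct.mapIncl N N))
    (u p : (WithConv (B →ₗ[k] k))ˣ) :
    (∀ a ∈ N, dualMulLeft a u.val = u.val a • p.val) ↔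
      ∀ a ∈ N, dualMulLeft a (u⁻¹).val = (u⁻¹).val a • (p⁻¹).val :=
  ⟨fun h _ ha => dualMulLeft_inv_eq hN h ha,
    fun h a ha => by simpa only [inv_inv] using dualMulLeft_inv_eq hN h ha⟩

theorem tfae_dualMulLeft_eq_smul (𝒜 : ℤ → Submodule k B)
    (h𝒜 : ∀ n : ℤ, ∀ b ∈ 𝒜 n,
      Coalgebra.comul (R := k) b ∈ LinearMap.range (TensorProduct.mapIncl (𝒜 n) (𝒜 n)))
    (U : ℤ → (WithConv (B →ₗ[k] k))ˣ) :
    List.TFAE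
      [ ∀ (i j : ℤ), ∀ a ∈ 𝒜 j,
          dualMulLeft a (U i).val * (U j).val = (U i).val a • (U (i + j)).val,
        ∀ (i j : ℤ), ∀ a ∈ 𝒜 j,
          dualMulLeft a (U i).val = (U i).val a • ((U (i + j)).val * (U j)⁻¹.val),
        ∀ (i j : ℤ), ∀ a ∈ 𝒜 j,
          dualMulLeft a (U i)⁻¹.val = (U i)⁻¹.val a • ((U j).val * (U (i + j))⁻¹.val),
        ∀ (i j : ℤ), ∀ a ∈ 𝒜 j,
          dualMulLeft a (U i)⁻¹.val * (U (i + j)).val = (U i)⁻¹.val a • (U j).val ] := by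
  tfae_have 1 ↔ 2 := forall₄_congr fun i j a _ => by
    rw [← smul_mul_assoc, Units.eq_mul_inv_iff_mul_eq]
  tfae_have 2 ↔ 3 := forall₂_congr fun i j => by
    simpa using forall_dualMulLeft_eq_iff_inv (h𝒜 j) (U i) (U (i + j) * (U j)⁻¹)
  tfae_have 3 ↔ 4 := forall₄_congr fun i j a _ => by
    rw [← smul_mul_assoc, Units.eq_mul_inv_iff_mul_eq]
  tfae_finish

end DualMul

theorem statement0 {k B : Type*} [Field k] [Ring B] [Bialgebra k B]
    (𝒜 : ℤ → Submodule k B)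
    (hT2 : ∀ n : ℤ, ∀ b ∈ 𝒜 n,
      Coalgebra.comul (R := k) b ∈ LinearMap.range (TensorProduct.mapIncl (𝒜 n) (𝒜 n)))
    (α αinv : ℤ → (B →ₗ[k] k))
    (hinv : ∀ i : ℤ, conv (α i) (αinv i) = Coalgebra.counit ∧
      conv (αinv i) (α i) = Coalgebra.counit) :
    List.TFAE
      [ ∀ (i j : ℤ), ∀ a ∈ 𝒜 j, ∀ b : B,
          conv ((α i) ∘ₗ LinearMap.mulLeft k a) (α j) b = α i a * α (i + j) b,
        ∀ (i j : ℤ), ∀ a ∈ 𝒜 j, ∀ b : B,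
          α i (a * b) = α i a * conv (α (i + j)) (αinv j) b,
        ∀ (i j : ℤ), ∀ a ∈ 𝒜 j, ∀ b : B,
          αinv i (a * b) = αinv i a * conv (α j) (αinv (i + j)) b,
        ∀ (i j : ℤ), ∀ a ∈ 𝒜 j, ∀ b : B,
          conv ((αinv i) ∘ₗ LinearMap.mulLeft k a) (α (i + j)) b = αinv i a * α j b ] := by
  have h := tfae_dualMulLeft_eq_smul 𝒜 hT2 fun i =>
    ⟨toConv (α i), toConv (αinv i), toConv_mul_toConv_eq_one (hinv i).1,
      toConv_mul_toConv_eq_one (hinv i).2⟩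
  simp only [WithConv.eq_iff_forall_apply] at h
  exact h
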